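/- If R_0 > 1, the starvation relation ≻ is a strict partial order (irreflexive, asymmetric, and transitive) on the set of stages. -/

import Mathlib

open scoped ENNReal

/-- Product of the follow-on constants over the cyclic interval `[j,k)` in `ZMod n`
(the empty product for `j = k`). -/
noncomputable def cycProd {n : ℕ} (M : ZMod n → ℝ≥0∞) (j k : ZMod n) : ℝ≥0∞ :=
  ∏ i ∈ Finset.range ((k - j).val), M (j + (i : ZMod n))

/-- The starvation relation `j ≻ k` : `b j` is finite and `b j * M_{jk} < b k`. -/
def Starves {n : ℕ} (M : ZMod n → ℝ≥0∞) (b : ZMod n → ℝ≥0∞) (j k : ZMod n) : Prop :=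
  b j < ⊤ ∧ b j * cycProd M j k < b k

/-!
Concatenating the cyclic intervals `[j,k)` and `[k,l)` covers `[j,l)`, plus one full turn of
the cycle when they overlap; so `M_{jl} ≤ M_{jk} M_{kl}` as soon as `R₀ ≥ 1`. Hence
`j ≻ k ≻ l` gives `b_j M_{jl} ≤ b_j M_{jk} M_{kl} ≤ b_k M_{kl} < b_l`, which is transitivity,
and asymmetry follows from transitivity and irreflexivity, as `M_{jj} = 1`.
-/

open Finset

lemma ZMod.prod_range_add_natCast {n : ℕ} [NeZero n] {β : Type*} [CommMonoid β]
    (f : ZMod n → β) (j : ZMod n) : ∏ i ∈ range n, f (j + i) = ∏ x, f x :=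
  prod_nbij' (fun i ↦ j + i) (fun x ↦ (x - j).val) (by simp) (fun x _ ↦ by simp [ZMod.val_lt])
    (fun i hi ↦ by simpa using ZMod.val_cast_of_lt (mem_range.mp hi))
    (fun x _ ↦ by simp) (fun _ _ ↦ rfl)

section cycProd

variable {n : ℕ} (M : ZMod n → ℝ≥0∞)

@[simp]
lemma cycProd_self (j : ZMod n) : cycProd M j j = 1 := by
  simp [cycProd]

variable [NeZero n]

lemma cycProd_mul_cycProd (j k l : ZMod n) :
    cycProd M j k * cycProd M k l = ∏ i ∈ range ((k - j).val + (l - k).val), M (j + i) := by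
  rw [prod_range_add]
  congr 1
  refine prod_congr rfl fun i _ ↦ ?_
  simp [← add_assoc]

variable {M}

lemma cycProd_le_mul_cycProd (hM : 1 ≤ ∏ x, M x) (j k l : ZMod n) :
    cycProd M j l ≤ cycProd M j k * cycProd M k l := by
  have hval : (l - j).val = ((k - j).val + (l - k).val) % n := by
    rw [← ZMod.val_add, sub_add_sub_cancel']
  rw [cycProd_mul_cycProd]
  rcases lt_or_ge ((k - j).val + (l - k).val) n with hlt | hge
  · rw [cycProd, hval, Nat.mod_eq_of_lt hlt]
  · have hsum : (k - j).val + (l - k).val = (l - j).val + n := by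
      have := (k - j).val_lt
      have := (l - k).val_lt
      rw [hval, Nat.mod_eq_sub_mod hge, Nat.mod_eq_of_lt (by omega)]
      omega
    rw [hsum, prod_range_add]
    refine le_mul_of_one_le_right' (le_of_le_of_eq hM ?_)
    rw [← ZMod.prod_range_add_natCast _ l]
    simp [← add_assoc]

end cycProd

section Starves

variable {n : ℕ} {M b : ZMod n → ℝ≥0∞}

lemma not_starves_self (j : ZMod n) : ¬ Starves M b j j := by
  simp [Starves]

lemma Starves.trans [NeZero n] (hM : 1 ≤ ∏ x, M x) {j k l : ZMod n}
    (hjk : Starves M b j k) (hkl : Starves M b k l) : Starves M b j l := by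
  refine ⟨hjk.1, ?_⟩
  calc b j * cycProd M j l
      ≤ b j * (cycProd M j k * cycProd M k l) := by gcongr; exact cycProd_le_mul_cycProd hM j k l
    _ = b j * cycProd M j k * cycProd M k l := (mul_assoc _ _ _).symm
    _ ≤ b k * cycProd M k l := by gcongr; exact hjk.2.le
    _ < b l := hkl.2

end Starves

theorem starvation_strict_partial_order_general {n : ℕ} [NeZero n]
    (M : ZMod n → ℝ≥0∞)
    (b : ZMod n → ℝ≥0∞)
    (hR0 : 1 < ∏ j : ZMod n, M j) :
    (∀ j : ZMod n, ¬ Starves M b j j) ∧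
    (∀ j k : ZMod n, Starves M b j k → ¬ Starves M b k j) ∧
    (∀ j k l : ZMod n, Starves M b j k → Starves M b k l → Starves M b j l) :=
  ⟨not_starves_self, fun j _ hjk hkj ↦ not_starves_self j (hjk.trans hR0.le hkj),
    fun _ _ _ hjk hkl ↦ hjk.trans hR0.le hkl⟩

/-- If `R₀ > 1`, the starvation relation is a strict partial order on the stages:
irreflexive, asymmetric and transitive. -/
theorem starvation_strict_partial_order {n : ℕ} [NeZero n]
    (M : ZMod n → ℝ≥0∞) (hM : ∀ j, 0 < M j ∧ M j < ⊤)
    (b : ZMod n → ℝ≥0∞) (hb : ∀ j, 0 < b j)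
    (hR0 : 1 < ∏ j : ZMod n, M j) :
    (∀ j : ZMod n, ¬ Starves M b j j) ∧
    (∀ j k : ZMod n, Starves M b j k → ¬ Starves M b k j) ∧
    (∀ j k l : ZMod n, Starves M b j k → Starves M b k l → Starves M b j l) :=
  starvation_strict_partial_order_general M b hR0
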